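/- SO_3(R) contains no subgroup isomorphic to F_2 × F_2. -/

import Mathlib

/-!
A rotation `a ≠ 1` of `ℝ³` fixes exactly one line. Whatever commutes with `a` preserves that line
and acts on it by `±1`, so its square fixes the line pointwise; and the rotations with a common
axis form a copy of the abelian group `SO(2)`. Hence the squares of any two elements of the
centraliser of `a` commute. In `F₂ × F₂`, with `F₂` free on `x, y`, the centraliser of `(x, 1)`
contains `(1, x)` and `(1, y)`, whose squares do not commute.
-/

open Matrix

namespace Matrix

theorem mulVec_dotProduct_mulVec_of_mem_orthogonalGroup {n R : Type*} [Fintype n]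
    [DecidableEq n] [CommRing R] {A : Matrix n n R} (hA : A ∈ orthogonalGroup n R)
    (v w : n → R) : (A *ᵥ v) ⬝ᵥ (A *ᵥ w) = v ⬝ᵥ w := by
  rw [dotProduct_mulVec, ← mulVec_transpose, mulVec_mulVec, (mem_orthogonalGroup_iff' _ _).mp hA,
    one_mulVec]

theorem exists_mulVec_eq_self_of_mem_specialOrthogonalGroup {n R : Type*} [Fintype n]
    [DecidableEq n] [CommRing R] [IsDomain R] [CharZero R] (hn : Odd (Fintype.card n))
    {A : Matrix n n R} (hA : A ∈ specialOrthogonalGroup n R) : ∃ v ≠ 0, A *ᵥ v = v := by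
  obtain ⟨hAo, hAd⟩ := mem_specialOrthogonalGroup_iff.mp hA
  rw [mem_orthogonalGroup_iff] at hAo
  have : (A - 1).det = -(A - 1).det := calc
    (A - 1).det = (A * (1 - Aᵀ)).det := by rw [Matrix.mul_sub, mul_one, hAo]
    _ = (1 - A).det := by
      rw [det_mul, hAd, one_mul, ← det_transpose, transpose_sub, transpose_one,
        transpose_transpose]
    _ = -(A - 1).det := by rw [← neg_sub, det_neg, hn.neg_one_pow, neg_one_mul]
  obtain ⟨v, hv, hAv⟩ := exists_mulVec_eq_zero_iff.mpr (self_eq_neg.mp this)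
  exact ⟨v, hv, by rwa [sub_mulVec, one_mulVec, sub_eq_zero] at hAv⟩

theorem exists_mem_orthogonalGroup_mulVec_single_eq_smul {n : Type*} [Fintype n]
    [DecidableEq n] (i : n) {v : n → ℝ} (hv : v ≠ 0) :
    ∃ P ∈ orthogonalGroup n ℝ, ∃ t ≠ (0 : ℝ), P *ᵥ Pi.single i 1 = t • v := by
  set w : EuclideanSpace ℝ n := WithLp.toLp 2 v
  have hw : ‖w‖ ≠ 0 := by simpa [w] using hv
  obtain ⟨b, hb⟩ := Orthonormal.exists_orthonormalBasis_extension_of_card_eq (𝕜 := ℝ)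
    (ι := n) (by simp) (v := fun _ => ‖w‖⁻¹ • w) (s := {i}) (by simp [norm_smul, hw])
  refine ⟨(EuclideanSpace.basisFun n ℝ).toBasis.toMatrix b,
    (EuclideanSpace.basisFun n ℝ).toMatrix_orthonormalBasis_mem_orthogonal b, ‖w‖⁻¹,
    inv_ne_zero hw, ?_⟩
  ext j
  simp [Module.Basis.toMatrix_apply, hb i rfl, w]

theorem exists_mem_specialOrthogonalGroup_mulVec_single_eq_smul {n : Type*} [Fintype n]
    [DecidableEq n] (hn : Odd (Fintype.card n)) (i : n) {v : n → ℝ} (hv : v ≠ 0) :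
    ∃ P ∈ specialOrthogonalGroup n ℝ, ∃ t ≠ (0 : ℝ), P *ᵥ Pi.single i 1 = t • v := by
  obtain ⟨P, hP, t, ht, hPv⟩ := exists_mem_orthogonalGroup_mulVec_single_eq_smul i hv
  have hdet : P.det * P.det = 1 := by
    simpa using congrArg det ((mem_orthogonalGroup_iff' _ _).mp hP)
  rcases mul_self_eq_one_iff.mp hdet with h | h
  · exact ⟨P, mem_specialOrthogonalGroup_iff.mpr ⟨hP, h⟩, t, ht, hPv⟩
  · refine ⟨-P, mem_specialOrthogonalGroup_iff.mpr ⟨?_, ?_⟩, -t, neg_ne_zero.mpr ht, ?_⟩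
    · simpa [mem_orthogonalGroup_iff] using hP
    · rw [det_neg, hn.neg_one_pow, h, neg_one_mul, neg_neg]
    · rw [neg_mulVec, hPv, neg_smul]

end Matrix

section RotZ

local notation "e₃" => (Pi.single 2 1 : Fin 3 → _)

variable {R : Type*} [CommRing R]

def rotZ (c s : R) : Matrix (Fin 3) (Fin 3) R :=
  !![c, -s, 0; s, c, 0; 0, 0, 1]

theorem rotZ_commute (c s c' s' : R) : Commute (rotZ c s) (rotZ c' s') := by
  rw [Commute, SemiconjBy, rotZ, rotZ, mul_fin_three, mul_fin_three]
  ext i j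
  fin_cases i <;> fin_cases j <;> simp <;> ring

theorem exists_eq_rotZ_of_mulVec_single {A : Matrix (Fin 3) (Fin 3) R}
    (hA : A ∈ specialOrthogonalGroup (Fin 3) R) (hfix : A *ᵥ e₃ = e₃) :
    ∃ c s, A = rotZ c s := by
  obtain ⟨hAo, hAd⟩ := mem_specialOrthogonalGroup_iff.mp hA
  have hAtA := (mem_orthogonalGroup_iff' _ _).mp hAo
  have hAt : Aᵀ *ᵥ e₃ = e₃ := by rw [← hfix, mulVec_mulVec, hAtA, one_mulVec, hfix]
  have hcol j := congrFun hfix j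
  have hrow j := congrFun hAt j
  have ho j := congrFun (congrFun hAtA 0) j
  simp only [mulVec_single_one] at hcol hrow
  have h02 : A 0 2 = 0 := by simpa using hcol 0
  have h12 : A 1 2 = 0 := by simpa using hcol 1
  have h22 : A 2 2 = 1 := by simpa using hcol 2
  have h20 : A 2 0 = 0 := by simpa using hrow 0
  have h21 : A 2 1 = 0 := by simpa using hrow 1
  have h00 : A 0 0 * A 0 0 + A 1 0 * A 1 0 = 1 := by
    simpa [mul_apply, Fin.sum_univ_three, h20] using ho 0
  have h01 : A 0 0 * A 0 1 + A 1 0 * A 1 1 = 0 := by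
    simpa [mul_apply, Fin.sum_univ_three, h20, h21] using ho 1
  have hdet : A 0 0 * A 1 1 - A 0 1 * A 1 0 = 1 := by
    rw [det_fin_three, h02, h12, h20, h21, h22] at hAd
    linear_combination hAd
  refine ⟨A 0 0, A 1 0, ?_⟩
  ext i j
  fin_cases i <;> fin_cases j <;> simp [rotZ, h02, h12, h22, h20, h21]
  · linear_combination A 0 0 * h01 - A 1 0 * hdet - A 0 1 * h00
  · linear_combination A 1 0 * h01 + A 0 0 * hdet - A 1 1 * h00

theorem eq_smul_single_of_rotZ_mulVec_eq_self {c s : ℝ} (hne : rotZ c s ≠ 1)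
    {w : Fin 3 → ℝ} (hw : rotZ c s *ᵥ w = w) : w = w 2 • e₃ := by
  have h0 : c * w 0 - s * w 1 = w 0 := by
    simpa [rotZ, mulVec, dotProduct, Fin.sum_univ_three, sub_eq_add_neg] using congrFun hw 0
  have h1 : s * w 0 + c * w 1 = w 1 := by
    simpa [rotZ, mulVec, dotProduct, Fin.sum_univ_three] using congrFun hw 1
  have hd : (c - 1) ^ 2 + s ^ 2 ≠ 0 := by
    intro hd
    obtain ⟨rfl, rfl⟩ : c = 1 ∧ s = 0 := by
      constructor <;> nlinarith [sq_nonneg (c - 1), sq_nonneg s]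
    exact hne (by simp [rotZ, one_fin_three])
  have hw0 : w 0 = 0 := by
    refine (mul_eq_zero.mp ?_).resolve_left hd
    linear_combination (c - 1) * h0 + s * h1
  have hw1 : w 1 = 0 := by
    refine (mul_eq_zero.mp ?_).resolve_left hd
    linear_combination (c - 1) * h1 - s * h0
  ext j
  fin_cases j <;> simp [hw0, hw1]

end RotZ

abbrev SO3 : Submonoid (Matrix (Fin 3) (Fin 3) ℝ) := specialOrthogonalGroup (Fin 3) ℝ

namespace SO3

local notation "e₃" => (Pi.single 2 1 : Fin 3 → ℝ)
local notation "M₃" => Matrix (Fin 3) (Fin 3) ℝ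

theorem commute_of_mulVec_single_eq_self {x y : SO3} (hx : (x : M₃) *ᵥ e₃ = e₃)
    (hy : (y : M₃) *ᵥ e₃ = e₃) : Commute x y := by
  obtain ⟨c, s, hcs⟩ := exists_eq_rotZ_of_mulVec_single x.2 hx
  obtain ⟨c', s', hcs'⟩ := exists_eq_rotZ_of_mulVec_single y.2 hy
  exact Subtype.ext <| by
    simpa only [Submonoid.coe_mul, hcs, hcs'] using (rotZ_commute c s c' s').eq

theorem sq_mulVec_single_eq_self_of_commute {a b : SO3} (ha : a ≠ 1)
    (hfix : (a : M₃) *ᵥ e₃ = e₃) (hab : Commute a b) :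
    ((b ^ 2 : SO3) : M₃) *ᵥ e₃ = e₃ := by
  obtain ⟨c, s, hcs⟩ := exists_eq_rotZ_of_mulVec_single a.2 hfix
  have hne : rotZ c s ≠ 1 := by
    rw [← hcs]
    exact fun h => ha (Subtype.ext h)
  have hbfix : rotZ c s *ᵥ (b *ᵥ e₃) = b *ᵥ e₃ := by
    rw [← hcs, mulVec_mulVec, ← Submonoid.coe_mul, hab.eq, Submonoid.coe_mul, ← mulVec_mulVec,
      hfix]
  have hbt := eq_smul_single_of_rotZ_mulVec_eq_self hne hbfix
  set t := ((b : M₃) *ᵥ e₃) 2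
  have ht : t * t = 1 := by
    simpa [hbt] using mulVec_dotProduct_mulVec_of_mem_orthogonalGroup b.2.1 e₃ e₃
  rw [pow_two, Submonoid.coe_mul, ← mulVec_mulVec, hbt, mulVec_smul, hbt, smul_smul, ht, one_smul]

theorem exists_conj_mulVec_single_eq_self (a : SO3) :
    ∃ p : SO3, ((MulAut.conj p a : SO3) : M₃) *ᵥ e₃ = e₃ := by
  obtain ⟨v, hv, hav⟩ := exists_mulVec_eq_self_of_mem_specialOrthogonalGroup (by decide) a.2
  obtain ⟨q, hq, t, ht, hqv⟩ :=
    exists_mem_specialOrthogonalGroup_mulVec_single_eq_smul (by decide) 2 hv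
  let r : SO3 := ⟨q, hq⟩
  refine ⟨r⁻¹, ?_⟩
  have hr : ((r⁻¹ : SO3) : M₃) * r = 1 := by
    rw [← Submonoid.coe_mul, inv_mul_cancel, OneMemClass.coe_one]
  rw [MulAut.conj_apply, inv_inv, Submonoid.coe_mul, Submonoid.coe_mul, ← mulVec_mulVec,
    ← mulVec_mulVec, hqv, mulVec_smul, hav, ← hqv, mulVec_mulVec, hr, one_mulVec]

theorem commute_sq_of_commute {a b c : SO3} (ha : a ≠ 1) (hab : Commute a b)
    (hac : Commute a c) : Commute (b ^ 2) (c ^ 2) := by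
  obtain ⟨p, hp⟩ := exists_conj_mulVec_single_eq_self a
  set φ := MulAut.conj p
  have ha' : φ a ≠ 1 := by simpa [φ] using ha
  have hb := sq_mulVec_single_eq_self_of_commute ha' hp (hab.map φ)
  have hc := sq_mulVec_single_eq_self_of_commute ha' hp (hac.map φ)
  rw [← map_pow] at hb hc
  exact (commute_map_iff φ.injective).mp (commute_of_mulVec_single_eq_self hb hc)

end SO3

theorem not_injective_freeGroup_prod_of_commute_sq {G : Type*} [Group G]
    (hG : ∀ a b c : G, a ≠ 1 → Commute a b → Commute a c → Commute (b ^ 2) (c ^ 2))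
    (f : FreeGroup (Fin 2) × FreeGroup (Fin 2) →* G) : ¬ Function.Injective f := by
  intro hf
  set x := FreeGroup.of (0 : Fin 2)
  set y := FreeGroup.of (1 : Fin 2)
  have hx : f (x, 1) ≠ 1 := by
    rw [← map_one f]
    exact hf.ne (by simp [x])
  have hcomm z : Commute (f (x, 1)) (f (1, z)) :=
    (Prod.commute_iff.mpr ⟨Commute.one_right x, Commute.one_left z⟩).map f
  have h := hG _ _ _ hx (hcomm x) (hcomm y)
  rw [← map_pow, ← map_pow, commute_map_iff hf, Prod.commute_iff] at h
  have hxy : ¬ Commute (x ^ 2) (y ^ 2) := by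
    unfold Commute SemiconjBy
    decide
  exact hxy (by simpa using h.2)

theorem so3_no_F2_times_F2 :
    ¬ ∃ f : FreeGroup (Fin 2) × FreeGroup (Fin 2) →* Matrix (Fin 3) (Fin 3) ℝ,
      (∀ g, f g ∈ Matrix.specialOrthogonalGroup (Fin 3) ℝ) ∧ Function.Injective f := by
  rintro ⟨f, hf, hinj⟩
  refine not_injective_freeGroup_prod_of_commute_sq (fun _ _ _ => SO3.commute_sq_of_commute)
    (f.codRestrict SO3 hf) fun g h hgh => hinj ?_
  exact congrArg Subtype.val hgh
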